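/- Let d ≥ 1 and k, q, β ∈ ℕ with 0 ≤ β ≤ q − 2d + 2. Let x ∈ ℝ^{4^d} with x ≠ 0 and every component a k-bit floating-point number (i.e., x_i = σ_i·m_i·2^{t_i} with σ_i ∈ {1,−1}, m_i ∈ ℕ, m_i < 2^k, t_i ∈ ℤ). Let e_max = ⌊log₂‖x‖_∞⌋ and ℓ = e_max − q + 1. Define the ZFP round trip: (compression) z_i = sgn(x_i)·⌊2^{−ℓ}·|x_i|⌋, w = 𝐿̃_d(z), ŵ_i = ∑_{j > q+1−β} d_i(j)·(−2)^j where d_i is the negabinary digit function of w_i; (decompression) u = L_d^{−1}·ŵ (exact inverse transform over ℝ), x̂_i = 2^ℓ·fl_k(u_i). Then ‖x̂ − x‖_∞ ≤ K_β·‖x‖_∞, where K_β = (15/4)^d·( (1+ε_k)·( (8/3)·ε_β + ε_q·(1 + (8/3)·ε_β)·(k_L·(1+ε_q) + 1) ) + ε_k ), with ε_m = 2^{1−m} and k_L = (7/4)·(2^d − 1). -/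

import Mathlib

/-- Floor division by 2, modeling a one-bit right shift of a two's complement integer. -/
def rr (p : ℤ) : ℤ := ⌊(p : ℚ) / 2⌋

/-- The ZFP forward transform matrix `L`. -/
noncomputable def Lmat : Matrix (Fin 4) (Fin 4) ℝ :=
  (1 / 16 : ℝ) • !![4, 4, 4, 4; 5, 1, -1, -5; -4, 4, 4, -4; -2, 6, -6, 2]

/-- The inverse ZFP transform matrix `L⁻¹`. -/
noncomputable def Linv : Matrix (Fin 4) (Fin 4) ℝ :=
  (1 / 4 : ℝ) • !![4, 6, -4, -1; 4, 2, 4, 5; 4, -2, 4, -5; 4, -6, -4, 1]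

/-- The lossy forward transform `𝐿̃ : ℤ⁴ → ℤ⁴` of ZFP, executed step by step. -/
def Ltilde (a : Fin 4 → ℤ) : Fin 4 → ℤ :=
  let a1 := a 0
  let a2 := a 1
  let a3 := a 2
  let a4 := a 3
  let a1 := a1 + a4
  let a1 := rr a1
  let a4 := a4 - a1
  let a3 := a3 + a2
  let a3 := rr a3
  let a2 := a2 - a3
  let a1 := a1 + a3
  let a1 := rr a1
  let a3 := a3 - a1
  let a4 := a4 + a2
  let a4 := rr a4
  let a2 := a2 - a4
  let a4 := a4 + rr a2
  let a2 := a2 - rr a4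
  ![a1, a2, a3, a4]

/-- The `d`-fold Kronecker power `L_d = L ⊗ ⋯ ⊗ L`, indexed by tuples in `{0,1,2,3}^d`. -/
noncomputable def LmatD (d : ℕ) : Matrix (Fin d → Fin 4) (Fin d → Fin 4) ℝ :=
  fun v w => ∏ j, Lmat (v j) (w j)

/-- The `d`-fold Kronecker power `L_d^{−1} = L^{−1} ⊗ ⋯ ⊗ L^{−1}`. -/
noncomputable def LinvD (d : ℕ) : Matrix (Fin d → Fin 4) (Fin d → Fin 4) ℝ :=
  fun v w => ∏ j, Linv (v j) (w j)

/-- Applying `𝐿̃` along dimension `j`. -/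
def applyAlong {d : ℕ} (j : Fin d) (z : (Fin d → Fin 4) → ℤ) : (Fin d → Fin 4) → ℤ :=
  fun v => Ltilde (fun t => z (Function.update v j t)) (v j)

/-- The lossy `d`-dimensional forward transform `𝐿̃_d`: apply `𝐿̃` along dimension 1,
then dimension 2, …, then dimension `d`. -/
def LtildeD {d : ℕ} (z : (Fin d → Fin 4) → ℤ) : (Fin d → Fin 4) → ℤ :=
  (List.finRange d).foldl (fun acc j => applyAlong j acc) z

/-- Truncation of the binary expansion of `y` to its `k` most significant bits. -/
noncomputable def flk (k : ℕ) (y : ℝ) : ℝ :=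
  if y = 0 then 0
  else (if 0 ≤ y then 1 else -1) * 2 ^ (⌊Real.logb 2 |y|⌋ - (k : ℤ) + 1) *
    (⌊(2 : ℝ) ^ ((k : ℤ) - 1 - ⌊Real.logb 2 |y|⌋) * |y|⌋ : ℤ)

/-!
After scaling by `2^(-ℓ)`, every lossy stage of the round trip adds a bounded absolute error:
at most `1` for the block-floating-point truncation, at most `7/4` per dimension for the lifted
transform `𝐿̃_d` (the exact `L` has absolute row sums `≤ 1`, so the errors of earlier dimensions
are not amplified by later ones), and at most `(2/3)·2^(q+2-β)` for dropping the low negabinary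
digits. The exact inverse `L_d^{-1}` amplifies these by at most its `∞`-norm `(15/4)^d`, and
`fl_k` contributes a relative error `ε_k`. Scaling back by `2^ℓ ≤ ε_q·‖x‖` gives the bound.
-/

open Finset
open scoped Matrix

lemma abs_sign_mul_floor_sub_le (c t : ℝ) :
    |(if 0 ≤ t then 1 else -1) * (⌊c * |t|⌋ : ℝ) - c * t| ≤ 1 := by
  have key : ∀ s : ℝ, |(⌊s⌋ : ℝ) - s| ≤ 1 := fun s => by
    rw [abs_sub_comm, Int.self_sub_floor, abs_of_nonneg (Int.fract_nonneg s)]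
    exact (Int.fract_lt_one s).le
  split_ifs with ht
  · simpa [abs_of_nonneg ht] using key (c * t)
  · have := key (c * -t)
    rw [abs_of_neg (not_le.mp ht), ← abs_neg]
    convert this using 2
    ring

lemma two_zpow_floor_logb_le {y : ℝ} (hy : 0 < y) : (2 : ℝ) ^ ⌊Real.logb 2 y⌋ ≤ y := by
  calc (2 : ℝ) ^ ⌊Real.logb 2 y⌋ = (2 : ℝ) ^ (⌊Real.logb 2 y⌋ : ℝ) := (Real.rpow_intCast _ _).symm
    _ ≤ (2 : ℝ) ^ Real.logb 2 y := Real.rpow_le_rpow_of_exponent_le one_le_two (Int.floor_le _)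
    _ = y := Real.rpow_logb two_pos (by norm_num) hy

lemma abs_flk_sub_le (k : ℕ) (y : ℝ) : |flk k y - y| ≤ 2 ^ (1 - (k : ℤ)) * |y| := by
  rcases eq_or_ne y 0 with rfl | hy
  · simp [flk]
  set e := ⌊Real.logb 2 |y|⌋
  have hcancel : (2 : ℝ) ^ (e - k + 1) * 2 ^ ((k : ℤ) - 1 - e) = 1 := by
    rw [← zpow_add₀ two_ne_zero]; ring_nf; exact zpow_zero _
  have hsplit : flk k y - y = 2 ^ (e - k + 1) * ((if 0 ≤ y then 1 else -1) *
      (⌊2 ^ ((k : ℤ) - 1 - e) * |y|⌋ : ℝ) - 2 ^ ((k : ℤ) - 1 - e) * y) := by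
    rw [flk, if_neg hy, mul_sub, ← mul_assoc _ _ y, hcancel]; ring
  calc |flk k y - y| ≤ 2 ^ (e - k + 1) * 1 := by
        rw [hsplit, abs_mul, abs_of_pos (by positivity)]
        gcongr
        exact abs_sign_mul_floor_sub_le _ _
    _ = 2 ^ (1 - (k : ℤ)) * 2 ^ e := by rw [mul_one, ← zpow_add₀ two_ne_zero]; ring_nf
    _ ≤ 2 ^ (1 - (k : ℤ)) * |y| := by gcongr; exact two_zpow_floor_logb_le (abs_pos.mpr hy)

-- The asymmetric bounds are the ones preserved by the recursion `s ↦ b 0 - 2 * s`.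
lemma negabinary_sum_range_bounds (b : ℕ → ℤ) (hb : ∀ j, 0 ≤ b j ∧ b j ≤ 1) (N : ℕ) :
    2 - 2 ^ (N + 1) ≤ 3 * ∑ j ∈ range N, b j * (-2) ^ j ∧
      3 * ∑ j ∈ range N, b j * (-2) ^ j ≤ 2 ^ (N + 1) - 1 := by
  induction N generalizing b with
  | zero => simp
  | succ N ih =>
    obtain ⟨hlo, hhi⟩ := ih (fun j => b (j + 1)) (fun j => hb (j + 1))
    have hsplit : ∑ j ∈ range (N + 1), b j * (-2) ^ j =
        b 0 - 2 * ∑ j ∈ range N, b (j + 1) * (-2) ^ j := by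
      rw [sum_range_succ']
      simp only [pow_succ, ← mul_assoc, ← sum_mul]
      ring
    rw [hsplit, pow_succ]
    have := hb 0
    constructor <;> linarith

lemma abs_sub_negabinary_truncate_le (D : ℕ →₀ ℤ) (hD : ∀ j, D j = 0 ∨ D j = 1) (N : ℕ) :
    |((∑ j ∈ D.support, D j * (-2) ^ j : ℤ) : ℝ) -
        ((∑ j ∈ D.support.filter (fun j => N ≤ j), D j * (-2) ^ j : ℤ) : ℝ)| ≤
      2 / 3 * 2 ^ N := by
  have hlow : ∑ j ∈ D.support, D j * (-2) ^ j -
      ∑ j ∈ D.support.filter (fun j => N ≤ j), D j * (-2) ^ j = ∑ j ∈ range N, D j * (-2) ^ j := by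
    rw [← sum_filter_add_sum_filter_not D.support (fun j => N ≤ j), add_sub_cancel_left]
    refine sum_subset (fun j hj => by simp at hj ⊢; omega) (fun j _ hj => ?_)
    simp_all
  obtain ⟨hlo, hhi⟩ :=
    negabinary_sum_range_bounds D (fun j => by rcases hD j with h | h <;> simp [h]) N
  have hint : 3 * |∑ j ∈ range N, D j * (-2) ^ j| ≤ 2 * 2 ^ N := by
    rw [← pow_succ']
    rcases abs_cases (∑ j ∈ range N, D j * (-2) ^ j) with ⟨h, -⟩ | ⟨h, -⟩ <;> rw [h] <;> linarith
  rw [← Int.cast_sub, hlow, ← Int.cast_abs]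
  have : (3 : ℝ) * |∑ j ∈ range N, D j * (-2) ^ j| ≤ 2 * 2 ^ N := by exact_mod_cast hint
  linarith

lemma norm_mulVec_le_of_sum_abs_le {m n : Type*} [Fintype m] [Fintype n] (A : Matrix m n ℝ)
    {c : ℝ} (hc : 0 ≤ c) (hA : ∀ r, ∑ t, |A r t| ≤ c) (y : n → ℝ) : ‖A *ᵥ y‖ ≤ c * ‖y‖ := by
  refine (pi_norm_le_iff_of_nonneg (by positivity)).mpr fun r => ?_
  calc ‖(A *ᵥ y) r‖ ≤ ∑ t, |A r t| * ‖y‖ := by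
        refine (norm_sum_le _ _).trans (sum_le_sum fun t _ => ?_)
        rw [norm_mul, Real.norm_eq_abs]
        gcongr
        exact norm_le_pi_norm y t
    _ ≤ c * ‖y‖ := by rw [← sum_mul]; gcongr; exact hA r

section Kronecker

variable {ι m n p R : Type*} [Fintype ι]

def kroneckerPi [CommMonoid R] (A : ι → Matrix m n R) : Matrix (ι → m) (ι → n) R :=
  fun v w => ∏ i, A i (v i) (w i)

lemma kroneckerPi_mul_kroneckerPi [DecidableEq ι] [Fintype n] [CommSemiring R]
    (A : ι → Matrix m n R) (B : ι → Matrix n p R) :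
    kroneckerPi A * kroneckerPi B = kroneckerPi (fun i => A i * B i) := by
  ext v w
  simp only [Matrix.mul_apply, kroneckerPi, ← prod_mul_distrib]
  rw [prod_univ_sum, Fintype.piFinset_univ]

lemma kroneckerPi_one [DecidableEq m] [CommSemiring R] :
    kroneckerPi (fun _ : ι => (1 : Matrix m m R)) = 1 := by
  ext v w
  simp only [kroneckerPi, Matrix.one_apply, Fintype.prod_boole, funext_iff]

lemma sum_abs_kroneckerPi [DecidableEq ι] [Fintype n] (A : ι → Matrix m n ℝ) (v : ι → m) :
    ∑ w, |kroneckerPi A v w| = ∏ i, ∑ t, |A i (v i) t| := by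
  simp only [kroneckerPi, abs_prod]
  rw [prod_univ_sum, Fintype.piFinset_univ]

lemma kroneckerPi_update_one_mulVec [DecidableEq ι] [DecidableEq m] [Fintype m] [CommSemiring R]
    (j : ι) (M : Matrix m m R) (y : (ι → m) → R) (v : ι → m) :
    (kroneckerPi (Function.update (fun _ => 1) j M) *ᵥ y) v =
      ∑ t, M (v j) t * y (Function.update v j t) := by
  have hentry : ∀ w, kroneckerPi (Function.update (fun _ => 1) j M) v w * y w =
      ∑ t, if Function.update v j t = w then M (v j) t * y (Function.update v j t) else 0 := by
    intro w
    rw [Fintype.sum_eq_single (w j) (fun t ht => if_neg fun h => ht (by simp [← h])),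
      kroneckerPi, Fintype.prod_eq_mul_prod_compl j]
    by_cases hw : Function.update v j (w j) = w
    · have hv : ∀ i ≠ j, v i = w i := (Function.update_eq_iff.mp hw).2
      rw [if_pos hw, hw, prod_eq_one fun i hi => ?_]
      · simp
      · rw [mem_compl, mem_singleton] at hi
        simp [Function.update_of_ne hi, hv i hi]
    · obtain ⟨i, hij, hi⟩ : ∃ i ≠ j, v i ≠ w i := by
        by_contra! h
        exact hw (Function.update_eq_iff.mpr ⟨rfl, h⟩)
      rw [if_neg hw, prod_eq_zero (i := i) (by simpa using hij) (by simp [hij, hi])]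
      simp
  simp only [Matrix.mulVec, dotProduct, hentry]
  rw [sum_comm]
  simp

-- Tracking exponents, rather than the set of dimensions already transformed, avoids a `Nodup`
-- hypothesis on `l`.
lemma foldl_kroneckerPi_update_one_mulVec [DecidableEq ι] [DecidableEq m] [Fintype m]
    [CommSemiring R] (M : Matrix m m R) (l : List ι) (e : ι → ℕ) (y : (ι → m) → R) :
    l.foldl (fun y j => kroneckerPi (Function.update (fun _ => 1) j M) *ᵥ y)
        (kroneckerPi (fun i => M ^ e i) *ᵥ y) =
      kroneckerPi (fun i => M ^ (e i + l.count i)) *ᵥ y := by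
  induction l generalizing e with
  | nil => simp
  | cons j l ih =>
    have hstep : kroneckerPi (Function.update (fun _ => 1) j M) * kroneckerPi (fun i => M ^ e i) =
        kroneckerPi (fun i => M ^ (e i + if j = i then 1 else 0)) := by
      rw [kroneckerPi_mul_kroneckerPi]
      congr 1; funext i
      by_cases hij : j = i
      · subst hij; simp [pow_succ']
      · simp [Ne.symm hij, hij]
    rw [List.foldl_cons, Matrix.mulVec_mulVec, hstep, ih]
    simp only [List.count_cons, beq_iff_eq, add_assoc, add_comm (List.count _ l)]

end Kronecker

lemma norm_foldl_sub_foldl_le {α X E : Type*} [SeminormedAddCommGroup E] (φ : X → E)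
    (f : α → X → X) (g : α → E → E) {ε : ℝ} (hf : ∀ a x, ‖φ (f a x) - g a (φ x)‖ ≤ ε)
    (hg : ∀ a y y', ‖g a y - g a y'‖ ≤ ‖y - y'‖) (l : List α) (x : X) (y : E) :
    ‖φ (l.foldl (fun x a => f a x) x) - l.foldl (fun y a => g a y) y‖ ≤
      ‖φ x - y‖ + l.length * ε := by
  induction l generalizing x y with
  | nil => simp
  | cons a l ih =>
    calc _ ≤ ‖φ (f a x) - g a y‖ + l.length * ε := ih _ _
      _ ≤ (ε + ‖φ x - y‖) + l.length * ε := by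
          gcongr
          exact (norm_sub_le_norm_sub_add_norm_sub _ (g a (φ x)) _).trans
            (add_le_add (hf a x) (hg a _ _))
      _ = ‖φ x - y‖ + (a :: l).length * ε := by push_cast [List.length_cons]; ring

lemma rr_bounds (p : ℤ) : (p : ℝ) - 1 ≤ 2 * rr p ∧ 2 * (rr p : ℝ) ≤ p := by
  have h : p - 1 ≤ 2 * rr p ∧ 2 * rr p ≤ p := by
    have hdiv : rr p = p / 2 := by simpa [rr] using Rat.floor_intCast_div_natCast p 2
    omega
  exact_mod_cast h

lemma abs_Ltilde_sub_Lmat_mulVec_le (a : Fin 4 → ℤ) (i : Fin 4) :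
    |(Ltilde a i : ℝ) - (Lmat *ᵥ fun t => (a t : ℝ)) i| ≤ 7 / 4 := by
  -- one bound for each of the six roundings performed by `Ltilde`
  obtain ⟨h1, h1'⟩ := rr_bounds (a 0 + a 3)
  obtain ⟨h2, h2'⟩ := rr_bounds (a 2 + a 1)
  obtain ⟨h3, h3'⟩ := rr_bounds (rr (a 0 + a 3) + rr (a 2 + a 1))
  obtain ⟨h4, h4'⟩ := rr_bounds (a 3 - rr (a 0 + a 3) + (a 1 - rr (a 2 + a 1)))
  obtain ⟨h5, h5'⟩ :=
    rr_bounds (a 1 - rr (a 2 + a 1) - rr (a 3 - rr (a 0 + a 3) + (a 1 - rr (a 2 + a 1))))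
  obtain ⟨h6, h6'⟩ := rr_bounds (rr (a 3 - rr (a 0 + a 3) + (a 1 - rr (a 2 + a 1))) +
    rr (a 1 - rr (a 2 + a 1) - rr (a 3 - rr (a 0 + a 3) + (a 1 - rr (a 2 + a 1)))))
  push_cast at *
  rw [abs_le]
  fin_cases i <;> simp [Ltilde, Lmat, Matrix.mulVec, dotProduct, Fin.sum_univ_four] <;>
    constructor <;> linarith

lemma LmatD_eq_kroneckerPi (d : ℕ) : LmatD d = kroneckerPi (fun _ : Fin d => Lmat) := rfl

lemma LinvD_eq_kroneckerPi (d : ℕ) : LinvD d = kroneckerPi (fun _ : Fin d => Linv) := rfl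

lemma sum_abs_Lmat_le (r : Fin 4) : ∑ t, |Lmat r t| ≤ 1 := by
  fin_cases r <;> simp [Lmat, Fin.sum_univ_four] <;> norm_num [abs_of_nonneg]

lemma sum_abs_Linv (r : Fin 4) : ∑ t, |Linv r t| = 15 / 4 := by
  fin_cases r <;> simp [Linv, Fin.sum_univ_four] <;> norm_num [abs_of_nonneg]

lemma Linv_mul_Lmat : Linv * Lmat = 1 := by
  ext i j
  fin_cases i <;> fin_cases j <;>
    simp [Linv, Lmat, Matrix.mul_apply, Fin.sum_univ_four] <;> norm_num

lemma norm_LtildeD_sub_LmatD_mulVec_le {d : ℕ} (z : (Fin d → Fin 4) → ℤ) :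
    ‖(fun v => (LtildeD z v : ℝ)) - LmatD d *ᵥ (fun v => (z v : ℝ))‖ ≤ 7 / 4 * d := by
  set K : Fin d → Matrix (Fin d → Fin 4) (Fin d → Fin 4) ℝ :=
    fun j => kroneckerPi (Function.update (fun _ => 1) j Lmat)
  have hstep : ∀ j (z : (Fin d → Fin 4) → ℤ),
      ‖(fun v => (applyAlong j z v : ℝ)) - K j *ᵥ (fun v => (z v : ℝ))‖ ≤ 7 / 4 := by
    refine fun j z => (pi_norm_le_iff_of_nonneg (by norm_num)).mpr fun v => ?_
    rw [Pi.sub_apply, kroneckerPi_update_one_mulVec, Real.norm_eq_abs]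
    exact abs_Ltilde_sub_Lmat_mulVec_le _ _
  have hK : ∀ j (y y' : (Fin d → Fin 4) → ℝ), ‖K j *ᵥ y - K j *ᵥ y'‖ ≤ ‖y - y'‖ := by
    intro j y y'
    rw [← Matrix.mulVec_sub, ← one_mul ‖y - y'‖]
    refine norm_mulVec_le_of_sum_abs_le _ zero_le_one (fun v => ?_) _
    rw [sum_abs_kroneckerPi]
    refine prod_le_one (fun i _ => sum_nonneg fun _ _ => abs_nonneg _) fun i _ => ?_
    rcases eq_or_ne i j with rfl | hij
    · simpa using sum_abs_Lmat_le _
    · simp [Function.update_of_ne hij, Matrix.one_apply, apply_ite]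
  have hexact : (List.finRange d).foldl (fun y j => K j *ᵥ y) (fun v => (z v : ℝ)) =
      LmatD d *ᵥ (fun v => (z v : ℝ)) := by
    rw [LmatD_eq_kroneckerPi]
    simpa [K, kroneckerPi_one, List.count_finRange] using
      foldl_kroneckerPi_update_one_mulVec Lmat (List.finRange d) 0 (fun v => (z v : ℝ))
  simpa [hexact, LtildeD, mul_comm] using
    norm_foldl_sub_foldl_le (fun z v => (z v : ℝ)) applyAlong (fun j y => K j *ᵥ y) hstep hK
      (List.finRange d) z (fun v => (z v : ℝ))

lemma LinvD_mul_LmatD (d : ℕ) : LinvD d * LmatD d = 1 := by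
  rw [LinvD_eq_kroneckerPi, LmatD_eq_kroneckerPi, kroneckerPi_mul_kroneckerPi]
  simp only [Linv_mul_Lmat, kroneckerPi_one]

lemma norm_LinvD_mulVec_le (d : ℕ) (y : (Fin d → Fin 4) → ℝ) :
    ‖LinvD d *ᵥ y‖ ≤ (15 / 4) ^ d * ‖y‖ := by
  refine norm_mulVec_le_of_sum_abs_le _ (by positivity) (fun v => ?_) y
  rw [LinvD_eq_kroneckerPi, sum_abs_kroneckerPi]
  simp only [sum_abs_Linv, prod_const, card_univ, Fintype.card_fin, le_refl]

lemma norm_LinvD_mulVec_sub_le (d : ℕ) (a b y : (Fin d → Fin 4) → ℝ) :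
    ‖LinvD d *ᵥ b - y‖ ≤ ‖a - y‖ + (15 / 4) ^ d * ‖b - LmatD d *ᵥ a‖ := by
  have hsplit : LinvD d *ᵥ b - y = (a - y) + LinvD d *ᵥ (b - LmatD d *ᵥ a) := by
    rw [Matrix.mulVec_sub, Matrix.mulVec_mulVec, LinvD_mul_LmatD, Matrix.one_mulVec]; abel
  rw [hsplit]
  exact (norm_add_le _ _).trans (by gcongr; exact norm_LinvD_mulVec_le d _)

lemma norm_mul_flk_sub_le {ι : Type*} [Fintype ι] (k : ℕ) {s : ℝ} (hs : 0 < s) (u x : ι → ℝ) :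
    ‖(fun v => s * flk k (u v)) - x‖ ≤
      2 ^ (1 - (k : ℤ)) * ‖x‖ + (1 + 2 ^ (1 - (k : ℤ))) * (s * ‖u - s⁻¹ • x‖) := by
  refine (pi_norm_le_iff_of_nonneg (by positivity)).mpr fun v => ?_
  have hu : |u v - s⁻¹ * x v| ≤ ‖u - s⁻¹ • x‖ := by
    simpa using norm_le_pi_norm (u - s⁻¹ • x) v
  have hx : |x v| ≤ ‖x‖ := by simpa using norm_le_pi_norm x v
  have hsx : s * |s⁻¹ * x v| = |x v| := by
    rw [abs_mul, abs_inv, abs_of_pos hs, mul_inv_cancel_left₀ hs.ne']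
  have hsplit : s * flk k (u v) - x v = s * (flk k (u v) - u v) + s * (u v - s⁻¹ * x v) := by
    field_simp; ring
  have hfl := abs_flk_sub_le k (u v)
  have habs : |u v| ≤ |s⁻¹ * x v| + |u v - s⁻¹ * x v| := by
    simpa using abs_add_le (s⁻¹ * x v) (u v - s⁻¹ * x v)
  rw [Pi.sub_apply, Real.norm_eq_abs, hsplit]
  calc _ ≤ s * |flk k (u v) - u v| + s * |u v - s⁻¹ * x v| := by
        refine (abs_add_le _ _).trans_eq ?_; rw [abs_mul, abs_mul, abs_of_pos hs]
    _ ≤ s * (2 ^ (1 - (k : ℤ)) * (|s⁻¹ * x v| + ‖u - s⁻¹ • x‖)) + s * ‖u - s⁻¹ • x‖ := by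
        gcongr; exact hfl.trans (by gcongr; linarith)
    _ = 2 ^ (1 - (k : ℤ)) * |x v| + (1 + 2 ^ (1 - (k : ℤ))) * (s * ‖u - s⁻¹ • x‖) := by
        rw [← hsx]; ring
    _ ≤ _ := by gcongr

-- Here `a` stands for `7/4 * d` and `P` for `k_L = 7/4 * (2^d - 1)`.
lemma zfp_error_coeff_le {C a P Ek Eq Eβ : ℝ} (hC : 1 ≤ C) (ha : 0 ≤ a) (haP : a ≤ P)
    (hEk : 0 ≤ Ek) (hEq : 0 ≤ Eq) (hEβ : 0 ≤ Eβ) :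
    Ek + (1 + Ek) * (Eq * (1 + C * a) + C * (8 / 3 * Eβ)) ≤
      C * ((1 + Ek) * (8 / 3 * Eβ + Eq * (1 + 8 / 3 * Eβ) * (P * (1 + Eq) + 1)) + Ek) := by
  have hP : 0 ≤ P := ha.trans haP
  have h1 : 1 + a ≤ (1 + 8 / 3 * Eβ) * (P * (1 + Eq) + 1) := by
    have : 0 ≤ P * (1 + Eq) + 1 := by positivity
    nlinarith [mul_nonneg hP hEq, mul_nonneg hEβ this]
  have h2 : Eq * (1 + C * a) + C * (8 / 3 * Eβ) ≤
      C * (8 / 3 * Eβ + Eq * (1 + 8 / 3 * Eβ) * (P * (1 + Eq) + 1)) := by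
    nlinarith [mul_le_mul_of_nonneg_left h1 (mul_nonneg (zero_le_one.trans hC) hEq),
      mul_le_mul_of_nonneg_right hC hEq]
  nlinarith [mul_le_mul_of_nonneg_left h2 (by positivity : (0 : ℝ) ≤ 1 + Ek),
    mul_le_mul_of_nonneg_right hC hEk]

lemma zfp_error_budget_le (d k q β N : ℕ) (emax : ℤ) (hN : (N : ℤ) = q + 2 - β) {X : ℝ}
    (hX : 2 ^ emax ≤ X) :
    2 ^ (1 - (k : ℤ)) * X + (1 + 2 ^ (1 - (k : ℤ))) *
        (2 ^ (emax - q + 1) * (1 + (15 / 4) ^ d * (7 / 4 * d + 2 / 3 * 2 ^ N))) ≤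
      (15 / 4 : ℝ) ^ d * ((1 + 2 ^ (1 - (k : ℤ))) * ((8 / 3) * 2 ^ (1 - (β : ℤ)) +
        2 ^ (1 - (q : ℤ)) * (1 + (8 / 3) * 2 ^ (1 - (β : ℤ))) *
          ((7 / 4) * ((2 : ℝ) ^ d - 1) * (1 + 2 ^ (1 - (q : ℤ))) + 1)) +
        2 ^ (1 - (k : ℤ))) * X := by
  have hq : (2 : ℝ) ^ (emax - q + 1) = 2 ^ (1 - (q : ℤ)) * 2 ^ emax := by
    rw [← zpow_add₀ two_ne_zero]; ring_nf
  have hβ : (2 : ℝ) ^ (emax - q + 1) * 2 ^ N = 4 * 2 ^ (1 - (β : ℤ)) * 2 ^ emax := by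
    rw [← zpow_natCast, hN, show (4 : ℝ) = 2 ^ (2 : ℤ) by norm_num, ← zpow_add₀ two_ne_zero,
      ← zpow_add₀ two_ne_zero, ← zpow_add₀ two_ne_zero]
    ring_nf
  have hd : (d : ℝ) ≤ 2 ^ d - 1 := by
    have : (d + 1 : ℝ) ≤ 2 ^ d := by exact_mod_cast Nat.lt_two_pow_self
    linarith
  have hA : (2 : ℝ) ^ (emax - q + 1) * (1 + (15 / 4) ^ d * (7 / 4 * d + 2 / 3 * 2 ^ N)) =
      (2 ^ (1 - (q : ℤ)) * (1 + (15 / 4) ^ d * (7 / 4 * d)) +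
        (15 / 4) ^ d * (8 / 3 * 2 ^ (1 - (β : ℤ)))) * 2 ^ emax := by
    linear_combination (1 + (15 / 4 : ℝ) ^ d * (7 / 4 * d)) * hq + (15 / 4 : ℝ) ^ d * 2 / 3 * hβ
  rw [hA]
  calc _ ≤ 2 ^ (1 - (k : ℤ)) * X + (1 + 2 ^ (1 - (k : ℤ))) *
        ((2 ^ (1 - (q : ℤ)) * (1 + (15 / 4) ^ d * (7 / 4 * d)) +
          (15 / 4) ^ d * (8 / 3 * 2 ^ (1 - (β : ℤ)))) * X) := by gcongr
    _ = (2 ^ (1 - (k : ℤ)) + (1 + 2 ^ (1 - (k : ℤ))) *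
        (2 ^ (1 - (q : ℤ)) * (1 + (15 / 4) ^ d * (7 / 4 * d)) +
          (15 / 4) ^ d * (8 / 3 * 2 ^ (1 - (β : ℤ))))) * X := by ring
    _ ≤ _ := mul_le_mul_of_nonneg_right (zfp_error_coeff_le (one_le_pow₀ (by norm_num))
          (by positivity) (by linarith) (by positivity) (by positivity) (by positivity))
          ((zpow_pos two_pos _).le.trans hX)

theorem zfp_roundtrip_error_general (d k q β : ℕ)
    (hβ : (β : ℤ) ≤ (q : ℤ) - 2 * (d : ℤ) + 2)
    (x : (Fin d → Fin 4) → ℝ) (hx : x ≠ 0)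
    (emax ℓ : ℤ) (hemax : emax = ⌊Real.logb 2 ‖x‖⌋) (hℓ : ℓ = emax - (q : ℤ) + 1)
    (z : (Fin d → Fin 4) → ℤ)
    (hz : ∀ v, z v = (if 0 ≤ x v then 1 else -1) * ⌊(2 : ℝ) ^ (-ℓ) * |x v|⌋)
    (w : (Fin d → Fin 4) → ℤ) (hw : w = LtildeD z)
    (D : (Fin d → Fin 4) → (ℕ →₀ ℤ))
    (hD01 : ∀ v j, D v j = 0 ∨ D v j = 1)
    (hDrep : ∀ v, w v = ∑ j ∈ (D v).support, D v j * (-2 : ℤ) ^ j)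
    (what : (Fin d → Fin 4) → ℤ)
    (hwhat : ∀ v, what v =
      ∑ j ∈ (D v).support.filter (fun j : ℕ => (q : ℤ) + 1 - (β : ℤ) < (j : ℤ)),
        D v j * (-2 : ℤ) ^ j)
    (u : (Fin d → Fin 4) → ℝ) (hu : u = (LinvD d).mulVec (fun v => (what v : ℝ)))
    (xhat : (Fin d → Fin 4) → ℝ) (hxhat : ∀ v, xhat v = (2 : ℝ) ^ ℓ * flk k (u v)) :
    ‖xhat - x‖ ≤
      (15 / 4 : ℝ) ^ d * ((1 + 2 ^ (1 - (k : ℤ))) * ((8 / 3) * 2 ^ (1 - (β : ℤ)) +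
        2 ^ (1 - (q : ℤ)) * (1 + (8 / 3) * 2 ^ (1 - (β : ℤ))) *
          ((7 / 4) * ((2 : ℝ) ^ d - 1) * (1 + 2 ^ (1 - (q : ℤ))) + 1)) +
        2 ^ (1 - (k : ℤ))) * ‖x‖ := by
  obtain ⟨N, hN⟩ : ∃ N : ℕ, (N : ℤ) = q + 2 - β := ⟨_, Int.toNat_of_nonneg (by omega)⟩
  set Z : (Fin d → Fin 4) → ℝ := fun v => (z v : ℝ)
  have hZ : ‖Z - (2 : ℝ) ^ (-ℓ) • x‖ ≤ 1 := (pi_norm_le_iff_of_nonneg zero_le_one).mpr fun v => by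
    simpa [Z, hz v, apply_ite] using abs_sign_mul_floor_sub_le ((2 : ℝ) ^ (-ℓ)) (x v)
  have hW : ‖(fun v => (w v : ℝ)) - LmatD d *ᵥ Z‖ ≤ 7 / 4 * d :=
    hw ▸ norm_LtildeD_sub_LmatD_mulVec_le z
  have hŴ : ‖(fun v => (what v : ℝ)) - fun v => (w v : ℝ)‖ ≤ 2 / 3 * 2 ^ N := by
    refine (pi_norm_le_iff_of_nonneg (by positivity)).mpr fun v => ?_
    have htrunc : what v = ∑ j ∈ (D v).support.filter (N ≤ ·), D v j * (-2) ^ j := by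
      have hcut : ∀ j : ℕ, (q : ℤ) + 1 - β < j ↔ N ≤ j := fun j => by omega
      simp only [hwhat, hcut]
    rw [Pi.sub_apply, Real.norm_eq_abs, abs_sub_comm, hDrep, htrunc]
    exact abs_sub_negabinary_truncate_le _ (hD01 v) N
  have hu' : ‖u - (2 : ℝ) ^ (-ℓ) • x‖ ≤ 1 + (15 / 4) ^ d * (7 / 4 * d + 2 / 3 * 2 ^ N) := by
    rw [hu]
    refine (norm_LinvD_mulVec_sub_le d Z _ _).trans ?_
    gcongr
    exact (norm_sub_le_norm_sub_add_norm_sub _ (fun v => (w v : ℝ)) _).trans (by linarith)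
  have hemax' : (2 : ℝ) ^ emax ≤ ‖x‖ := hemax ▸ two_zpow_floor_logb_le (norm_pos_iff.mpr hx)
  calc ‖xhat - x‖ ≤ 2 ^ (1 - (k : ℤ)) * ‖x‖ +
        (1 + 2 ^ (1 - (k : ℤ))) * (2 ^ ℓ * ‖u - ((2 : ℝ) ^ ℓ)⁻¹ • x‖) := by
        rw [show xhat = fun v => 2 ^ ℓ * flk k (u v) from funext hxhat]
        exact norm_mul_flk_sub_le k (by positivity) u x
    _ ≤ 2 ^ (1 - (k : ℤ)) * ‖x‖ + (1 + 2 ^ (1 - (k : ℤ))) *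
        (2 ^ ℓ * (1 + (15 / 4) ^ d * (7 / 4 * d + 2 / 3 * 2 ^ N))) := by
        rw [← zpow_neg]; gcongr
    _ ≤ _ := hℓ ▸ zfp_error_budget_le d k q β N emax hN hemax'

/-- ZFP fixed-precision round-trip error bound: for `x ∈ ℝ^{4^d}`, `x ≠ 0`, with
`k`-bit floating-point components and precision parameter `0 ≤ β ≤ q − 2d + 2`,
compressing (Step 2 truncation `z`, lossy transform `w = 𝐿̃_d(z)`, negabinary
truncation `ŵ`) and decompressing (`u = L_d^{−1}·ŵ`, `x̂ = 2^ℓ·fl_k(u)`) satisfies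
`‖x̂ − x‖_∞ ≤ K_β·‖x‖_∞` with
`K_β = (15/4)^d·((1+ε_k)·((8/3)·ε_β + ε_q·(1+(8/3)·ε_β)·(k_L·(1+ε_q)+1)) + ε_k)`,
`ε_m = 2^{1−m}`, `k_L = (7/4)·(2^d − 1)`. -/
theorem zfp_roundtrip_error (d k q β : ℕ) (hd : 1 ≤ d)
    (hβ : (β : ℤ) ≤ (q : ℤ) - 2 * (d : ℤ) + 2)
    (x : (Fin d → Fin 4) → ℝ) (hx : x ≠ 0)
    (hfloat : ∀ v, ∃ (σ : ℝ) (m : ℕ) (t : ℤ),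
      (σ = 1 ∨ σ = -1) ∧ m < 2 ^ k ∧ x v = σ * (m : ℝ) * (2 : ℝ) ^ t)
    (emax ℓ : ℤ) (hemax : emax = ⌊Real.logb 2 ‖x‖⌋) (hℓ : ℓ = emax - (q : ℤ) + 1)
    (z : (Fin d → Fin 4) → ℤ)
    (hz : ∀ v, z v = (if 0 ≤ x v then 1 else -1) * ⌊(2 : ℝ) ^ (-ℓ) * |x v|⌋)
    (w : (Fin d → Fin 4) → ℤ) (hw : w = LtildeD z)
    (D : (Fin d → Fin 4) → (ℕ →₀ ℤ))
    (hD01 : ∀ v j, D v j = 0 ∨ D v j = 1)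
    (hDrep : ∀ v, w v = ∑ j ∈ (D v).support, D v j * (-2 : ℤ) ^ j)
    (what : (Fin d → Fin 4) → ℤ)
    (hwhat : ∀ v, what v =
      ∑ j ∈ (D v).support.filter (fun j : ℕ => (q : ℤ) + 1 - (β : ℤ) < (j : ℤ)),
        D v j * (-2 : ℤ) ^ j)
    (u : (Fin d → Fin 4) → ℝ) (hu : u = (LinvD d).mulVec (fun v => (what v : ℝ)))
    (xhat : (Fin d → Fin 4) → ℝ) (hxhat : ∀ v, xhat v = (2 : ℝ) ^ ℓ * flk k (u v)) :
    ‖xhat - x‖ ≤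
      (15 / 4 : ℝ) ^ d * ((1 + 2 ^ (1 - (k : ℤ))) * ((8 / 3) * 2 ^ (1 - (β : ℤ)) +
        2 ^ (1 - (q : ℤ)) * (1 + (8 / 3) * 2 ^ (1 - (β : ℤ))) *
          ((7 / 4) * ((2 : ℝ) ^ d - 1) * (1 + 2 ^ (1 - (q : ℤ))) + 1)) +
        2 ^ (1 - (k : ℤ))) * ‖x‖ :=
  zfp_roundtrip_error_general d k q β hβ x hx emax ℓ hemax hℓ z hz w hw D hD01 hDrep what hwhat u hu
    xhat hxhat
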